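/- Let t ≥ 1, n : Fin t → ℕ with 2 ≤ n j for all j, and N = ∏ j, n j. Suppose there exists k₀ : Fin t such that 6 · |{ j : Fin t | n j ≤ n k₀ }| = n k₀ · ((n k₀)² − 1). Then for every bijection v : Fin N → (Π j : Fin t, Fin (n j)) satisfying hammingDist (v i) (v (i+k)) ≥ t + 1 − k for all i and all 1 ≤ k < t with i + k < N, it holds that for every index i and every s with 1 ≤ s ≤ n k₀ and i + s < N, hammingDist (v i) (v (i+s)) = t − (s − 1); that is, v i and v (i+s) share exactly s − 1 coordinates. -/

import Mathlib

/-!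
Take a window of `n k₀ + 1` consecutive vertices `v a, …, v (a + n k₀)`. By the radio condition
and injectivity, the vertices at positions `p < q` of the window share at most `q - p - 1`
coordinates, so all pairs together share at most `∑ (q - p - 1) = C(n k₀ + 1, 3)` coordinates.
Conversely, by pigeonhole every coordinate `j` with `n j ≤ n k₀` is shared by some pair of the
window. The hypothesis says exactly that these two counts agree, so every pair attains its bound.
-/

open Finset

theorem sum_range_sub_sub_one (q : ℕ) : ∑ p ∈ range q, (q - p - 1) = q.choose 2 := by
  rw [Nat.choose_two_right, ← sum_range_id, ← sum_range_reflect (fun p => p) q]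
  exact sum_congr rfl fun p _ => by omega

theorem sum_range_choose_two (m : ℕ) : ∑ q ∈ range (m + 1), q.choose 2 = (m + 1).choose 3 := by
  induction m with
  | zero => rfl
  | succ m ih => rw [sum_range_succ, ih, Nat.choose_succ_succ' (m + 1), add_comm]

theorem six_mul_choose_three (m : ℕ) : 6 * (m + 1).choose 3 = m * (m ^ 2 - 1) := by
  rcases m with _ | m
  · rfl
  have h := Nat.descFactorial_eq_factorial_mul_choose (m + 2) 3
  norm_num [Nat.descFactorial_succ, Nat.factorial] at h
  rw [show (m + 1) ^ 2 - 1 = m * (m + 2) by rw [Nat.sub_eq_of_eq_add]; ring, ← h]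
  ring

theorem six_mul_sum_sigma_range_sub_sub_one (m : ℕ) :
    6 * ∑ x ∈ (range (m + 1)).sigma range, (x.1 - x.2 - 1) = m * (m ^ 2 - 1) := by
  rw [sum_sigma, ← six_mul_choose_three, ← sum_range_choose_two]
  simp only [sum_range_sub_sub_one]

theorem eq_of_prod_le_apply {ι : Type*} [Fintype ι] {n : ι → ℕ} (hn : ∀ j, 2 ≤ n j) {k : ι}
    (hle : ∏ j, n j ≤ n k) (j : ι) : j = k := by
  classical
  by_contra hjk
  have : n k * n j ≤ ∏ j, n j := by
    rw [← prod_pair (Ne.symm hjk)]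
    exact prod_le_prod_of_subset_of_one_le' (subset_univ _) fun i _ _ => by linarith [hn i]
  nlinarith [hn j, hn k]

section Hamming

variable {ι : Type*} {β : ι → Type*}

theorem exists_lt_le_apply_eq_of_card_le [∀ j, Fintype (β j)] (w : ℕ → ∀ j, β j) {j : ι}
    {m : ℕ} (h : Fintype.card (β j) ≤ m) : ∃ q ≤ m, ∃ p < q, w p j = w q j := by
  obtain ⟨p, q, hne, heq⟩ := Fintype.exists_ne_map_eq_of_card_lt
    (fun u : Fin (m + 1) => w u j) (by simpa using Nat.lt_succ_of_le h)
  rcases lt_or_gt_of_ne hne with hpq | hqp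
  · exact ⟨q, by omega, p, hpq, heq⟩
  · exact ⟨p, by omega, q, hqp, heq.symm⟩

variable [Fintype ι] [∀ j, DecidableEq (β j)]

theorem card_filter_apply_eq_add_hammingDist (x y : ∀ j, β j) :
    #{j | x j = y j} + hammingDist x y = Fintype.card ι :=
  card_filter_add_card_filter_not _

theorem card_filter_apply_eq_le_of_le_hammingDist {x y : ∀ j, β j} (hxy : x ≠ y) {k : ℕ}
    (hk : 1 ≤ k)
    (hrad : k < Fintype.card ι → Fintype.card ι + 1 - k ≤ hammingDist x y) :
    #{j | x j = y j} ≤ k - 1 := by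
  have hsum := card_filter_apply_eq_add_hammingDist x y
  have hpos := hammingDist_pos.2 hxy
  by_cases hkt : k < Fintype.card ι
  · have := hrad hkt
    omega
  · omega

theorem card_filter_apply_eq_le_of_radio {N : ℕ} {v : Fin N → ∀ j, β j}
    (hinj : Function.Injective v)
    (hrad : ∀ i k : ℕ, 1 ≤ k → k < Fintype.card ι → (h : i + k < N) →
      hammingDist (v ⟨i, by omega⟩) (v ⟨i + k, h⟩) ≥ Fintype.card ι + 1 - k)
    {i k : ℕ} (hk : 1 ≤ k) (h : i + k < N) :
    #{j | v ⟨i, by omega⟩ j = v ⟨i + k, h⟩ j} ≤ k - 1 :=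
  card_filter_apply_eq_le_of_le_hammingDist (hinj.ne (by simp [Fin.ext_iff]; omega)) hk
    (hrad i k hk · h)

variable [∀ j, Fintype (β j)]

theorem card_filter_card_le_le_sum_card_filter (w : ℕ → ∀ j, β j) (m : ℕ) :
    #{j | Fintype.card (β j) ≤ m} ≤
      ∑ x ∈ (range (m + 1)).sigma range, #{j | w x.2 j = w x.1 j} := by
  calc #{j | Fintype.card (β j) ≤ m}
      = ∑ j with Fintype.card (β j) ≤ m, 1 := card_eq_sum_ones _
    _ ≤ ∑ j with Fintype.card (β j) ≤ m,
          #{x ∈ (range (m + 1)).sigma range | w x.2 j = w x.1 j} := by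
        refine sum_le_sum fun j hj => card_pos.2 ?_
        obtain ⟨q, hq, p, hpq, heq⟩ := exists_lt_le_apply_eq_of_card_le w (mem_filter.1 hj).2
        exact ⟨⟨q, p⟩, by simp [hpq, heq]; omega⟩
    _ ≤ ∑ j, #{x ∈ (range (m + 1)).sigma range | w x.2 j = w x.1 j} :=
        sum_le_sum_of_subset (filter_subset _ _)
    _ = ∑ x ∈ (range (m + 1)).sigma range, #{j | w x.2 j = w x.1 j} := by
        simp only [card_filter]
        exact sum_comm

theorem card_filter_apply_eq_of_window {w : ℕ → ∀ j, β j} {m : ℕ}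
    (hw : ∀ q ≤ m, ∀ p < q, #{j | w p j = w q j} ≤ q - p - 1)
    (hcount : m * (m ^ 2 - 1) ≤ 6 * #{j | Fintype.card (β j) ≤ m})
    {p q : ℕ} (hq : q ≤ m) (hpq : p < q) :
    #{j | w p j = w q j} = q - p - 1 := by
  have hle : ∀ x ∈ (range (m + 1)).sigma range, #{j | w x.2 j = w x.1 j} ≤ x.1 - x.2 - 1 := by
    rintro ⟨q, p⟩ hx
    simp only [mem_sigma, mem_range] at hx
    exact hw q (by omega) p hx.2
  have hge : ∑ x ∈ (range (m + 1)).sigma range, (x.1 - x.2 - 1) ≤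
      ∑ x ∈ (range (m + 1)).sigma range, #{j | w x.2 j = w x.1 j} := by
    have := six_mul_sum_sigma_range_sub_sub_one m
    have := card_filter_card_le_le_sum_card_filter w m
    omega
  exact (sum_eq_sum_iff_of_le hle).1 (le_antisymm (sum_le_sum hle) hge) ⟨q, p⟩
    (by simp only [mem_sigma, mem_range]; omega)

end Hamming

/-- Theorem (BoundaryForcedGeneral): if 6·t̄_{k₀} = n k₀ (n k₀² − 1) for some factor k₀, then
in any ordering inducing a consecutive radio labeling, v i and v (i+s) share exactly s − 1
coordinates for every 1 ≤ s ≤ n k₀. -/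
theorem stmt_7 (t : ℕ) (n : Fin t → ℕ) (hn : ∀ j, 2 ≤ n j)
    (N : ℕ) (hN : N = ∏ j, n j) (k₀ : Fin t)
    (hk : 6 * Nat.card {j : Fin t // n j ≤ n k₀} = n k₀ * ((n k₀) ^ 2 - 1))
    (v : Fin N → ∀ j : Fin t, Fin (n j)) (hbij : Function.Bijective v)
    (hrad : ∀ i k : ℕ, 1 ≤ k → k < t → (h : i + k < N) →
      hammingDist (v ⟨i, by omega⟩) (v ⟨i + k, h⟩) ≥ t + 1 - k) :
    ∀ i s : ℕ, 1 ≤ s → s ≤ n k₀ → (h : i + s < N) →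
      hammingDist (v ⟨i, by omega⟩) (v ⟨i + s, h⟩) = t - (s - 1) := by
  intro i s hs hsm h
  have hcount : 6 * #{j | Fintype.card (Fin (n j)) ≤ n k₀} = n k₀ * (n k₀ ^ 2 - 1) := by
    simpa [Nat.card_eq_fintype_card, Fintype.card_subtype] using hk
  have hagree {i k : ℕ} (hk : 1 ≤ k) (h : i + k < N) :
      #{j | v ⟨i, by omega⟩ j = v ⟨i + k, h⟩ j} ≤ k - 1 :=
    card_filter_apply_eq_le_of_radio hbij.injective (by simpa using hrad) hk h
  suffices #{j | v ⟨i, by omega⟩ j = v ⟨i + s, h⟩ j} = s - 1 by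
    have := card_filter_apply_eq_add_hammingDist (v ⟨i, by omega⟩) (v ⟨i + s, h⟩)
    simp only [Fintype.card_fin] at this
    omega
  refine le_antisymm (hagree hs h) ?_
  by_cases hfit : n k₀ < N
  · set a := min i (N - 1 - n k₀)
    set w : ℕ → ∀ j, Fin (n j) := fun u => v ⟨(a + u) % N, Nat.mod_lt _ (by omega)⟩
    have hw {u : ℕ} (hu : a + u < N) : w u = v ⟨a + u, hu⟩ := by
      simp only [w, Nat.mod_eq_of_lt hu]
    have hwindow := card_filter_apply_eq_of_window (w := w) (m := n k₀)
      (fun q hq p hpq => by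
        rw [hw (by omega), hw (by omega)]
        simpa [show a + p + (q - p) = a + q by omega] using
          hagree (i := a + p) (k := q - p) (by omega) (by omega))
      hcount.ge (p := i - a) (q := i + s - a) (by omega) (by omega)
    rw [hw (by omega), hw (by omega)] at hwindow
    simp only [show a + (i - a) = i by omega, show a + (i + s - a) = i + s by omega] at hwindow
    omega
  · -- no window fits only if `t = 1` and `n k₀ = 2`, and then `s = 1`
    have hsingle := eq_of_prod_le_apply hn (k := k₀) (by omega)
    have hone : #{j | Fintype.card (Fin (n j)) ≤ n k₀} = 1 :=
      card_eq_one.2 ⟨k₀, by ext j; simp [hsingle j]⟩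
    have hm : n k₀ < 3 := by
      by_contra! h3
      have : 3 * 8 ≤ n k₀ * (n k₀ ^ 2 - 1) :=
        Nat.mul_le_mul h3 (Nat.le_sub_of_add_le (by nlinarith))
      omega
    omega
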